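/- Let d ≥ 2 and let H = F_2[T, X_2, …, X_d]/(T², X_i² − T·X_i : 2 ≤ i ≤ d) with t, α_2, …, α_d the images of the variables. Then for every element v of the F_2-span of {t, α_2, …, α_d} with v ≠ 0 and v ≠ t, the annihilator (0) : v = { h ∈ H : h·v = 0 } equals the ideal of H generated by t + v. -/

import Mathlib

open MvPolynomial

/-- The colon ideal `I : x = {a | a * x ∈ I}`. -/
def colonIdeal {A : Type*} [Ring A] (I : Ideal A) (x : A) : Ideal A :=
  Submodule.comap (LinearMap.toSpanSingleton A A x) I

/-- The defining relations `T², X_i² − T·X_i` (with `T = X 0`) of the cohomology of a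
2-rigid field of level 2. -/
noncomputable def rgRel (d : ℕ) [NeZero d] : Ideal (MvPolynomial (Fin d) (ZMod 2)) :=
  Ideal.span {p | p = X 0 ^ 2 ∨ ∃ i : Fin d, i ≠ 0 ∧ p = X i ^ 2 - X 0 * X i}

/-- The algebra `H = F₂[T, X₂, …, X_d]/(T², X_i² − T·X_i)`. -/
abbrev RGH (d : ℕ) [NeZero d] := MvPolynomial (Fin d) (ZMod 2) ⧸ rgRel d

/-- The images `t = gen d 0`, `α_i = gen d i` of the variables in `H`. -/
noncomputable def gen (d : ℕ) [NeZero d] (i : Fin d) : RGH d :=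
  Ideal.Quotient.mk (rgRel d) (X i)

/-- The degree-one component `H_1`, the `F₂`-span of `{t, α₂, …, α_d}`. -/
noncomputable def H1 (d : ℕ) [NeZero d] : Submodule (ZMod 2) (RGH d) :=
  Submodule.span (ZMod 2) (Set.range (gen d))

namespace Stmt13Aux

variable (d : ℕ) [NeZero d]

lemma mem_rgRel_sq : (X 0 ^ 2 : MvPolynomial (Fin d) (ZMod 2)) ∈ rgRel d :=
  Ideal.subset_span (Or.inl rfl)

lemma mem_rgRel_rel {i : Fin d} (hi : i ≠ 0) :
    (X i ^ 2 - X 0 * X i : MvPolynomial (Fin d) (ZMod 2)) ∈ rgRel d :=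
  Ideal.subset_span (Or.inr ⟨i, hi, rfl⟩)

lemma gen_zero_sq : gen d 0 ^ 2 = 0 := by
  rw [gen, ← map_pow, Ideal.Quotient.eq_zero_iff_mem]
  exact mem_rgRel_sq d

lemma gen_sq {i : Fin d} (hi : i ≠ 0) : gen d i ^ 2 = gen d 0 * gen d i := by
  rw [gen, gen, ← map_pow, ← map_mul, Ideal.Quotient.mk_eq_mk_iff_sub_mem]
  exact mem_rgRel_rel d hi

lemma two_eq_zero : (2 : RGH d) = 0 := by
  have h2 : ((2 : ℕ) : MvPolynomial (Fin d) (ZMod 2)) = 0 := by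
    exact_mod_cast CharP.cast_eq_zero (MvPolynomial (Fin d) (ZMod 2)) 2
  calc (2 : RGH d) = ((2 : ℕ) : RGH d) := by norm_cast
  _ = Ideal.Quotient.mk (rgRel d) ((2 : ℕ) : MvPolynomial (Fin d) (ZMod 2)) := by
        rw [map_natCast]
  _ = 0 := by rw [h2, map_zero]

lemma add_self_eq_zero (x : RGH d) : x + x = 0 := by
  rw [← two_mul, two_eq_zero, zero_mul]

lemma neg_eq_self (x : RGH d) : -x = x :=
  neg_eq_of_add_eq_zero_left (add_self_eq_zero d x)

instance : Nontrivial (RGH d) := by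
  refine Ideal.Quotient.nontrivial_iff.mpr ((Ideal.ne_top_iff_one _).mpr ?_)
  intro h1
  have hle : rgRel d ≤ RingHom.ker
      (MvPolynomial.eval (fun _ : Fin d => (0 : ZMod 2))) := by
    rw [rgRel, Ideal.span_le]
    rintro q hq
    rw [SetLike.mem_coe, RingHom.mem_ker]
    obtain rfl | ⟨i, hi, rfl⟩ := hq <;> simp
  have := hle h1
  rw [RingHom.mem_ker, map_one] at this
  exact one_ne_zero this

/-- The linear form `∑ cᵢ Xᵢ`. -/
noncomputable def Vp (c : Fin d → ZMod 2) : MvPolynomial (Fin d) (ZMod 2) :=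
  ∑ i, C (c i) * X i

lemma V_rel (c : Fin d → ZMod 2) :
    (Vp d c) ^ 2 - X 0 * Vp d c ∈ rgRel d := by
  have hsq : (Vp d c) ^ 2 = ∑ i, C (c i) * X i ^ 2 := by
    rw [Vp, sum_pow_char]
    refine Finset.sum_congr rfl fun i _ => ?_
    rw [mul_pow, ← map_pow, ZMod.pow_card]
  rw [hsq, Vp, Finset.mul_sum, ← Finset.sum_sub_distrib]
  refine Ideal.sum_mem _ fun i _ => ?_
  rcases eq_or_ne i 0 with rfl | hi
  · have h0 : C (c 0) * X 0 ^ 2 - X 0 * (C (c 0) * X 0)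
        = (0 : MvPolynomial (Fin d) (ZMod 2)) := by ring
    rw [h0]; exact Ideal.zero_mem _
  · have h1 : C (c i) * X i ^ 2 - X 0 * (C (c i) * X i)
        = C (c i) * (X i ^ 2 - X 0 * X i) := by ring
    rw [h1]; exact Ideal.mul_mem_left _ _ (mem_rgRel_rel d hi)

/-! ### The change-of-variables involution -/

/-- The substitution `X j ↦ ∑ cᵢ Xᵢ`, `X i ↦ X i` for `i ≠ j`. -/
noncomputable def sig0 (j : Fin d) (c : Fin d → ZMod 2) :
    MvPolynomial (Fin d) (ZMod 2) →ₐ[ZMod 2] MvPolynomial (Fin d) (ZMod 2) :=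
  aeval (fun i => if i = j then Vp d c else X i)

lemma sig0_X_ne (j : Fin d) (c : Fin d → ZMod 2) {i : Fin d} (hi : i ≠ j) :
    sig0 d j c (X i) = X i := by
  simp [sig0, hi]

lemma sig0_X_self (j : Fin d) (c : Fin d → ZMod 2) :
    sig0 d j c (X j) = Vp d c := by
  simp [sig0]

lemma sig0_C (j : Fin d) (c : Fin d → ZMod 2) (a : ZMod 2) :
    sig0 d j c (C a) = C a := by
  simp [sig0, algebraMap_eq]

lemma Vp_split (j : Fin d) (c : Fin d → ZMod 2) (hcj : c j = 1) :
    Vp d c = X j + ∑ i ∈ Finset.univ.erase j, C (c i) * X i := by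
  rw [Vp, ← Finset.add_sum_erase _ _ (Finset.mem_univ j), hcj, map_one, one_mul]

lemma sig0_Vp (j : Fin d) (c : Fin d → ZMod 2) (hcj : c j = 1) :
    sig0 d j c (Vp d c) = X j := by
  have hrest : ∀ i ∈ Finset.univ.erase j,
      sig0 d j c (C (c i) * X i) = C (c i) * X i := by
    intro i hi
    rw [map_mul, sig0_X_ne d j c (Finset.ne_of_mem_erase hi), sig0_C]
  rw [Vp, map_sum, ← Finset.add_sum_erase _ _ (Finset.mem_univ j),
    Finset.sum_congr rfl hrest, map_mul, sig0_X_self, sig0_C, hcj, map_one, one_mul,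
    Vp_split d j c hcj, add_assoc]
  have h2 : CharP (MvPolynomial (Fin d) (ZMod 2)) 2 := inferInstance
  rw [CharTwo.add_self_eq_zero, add_zero]

lemma sig0_sig0 (j : Fin d) (c : Fin d → ZMod 2) (hcj : c j = 1)
    (p : MvPolynomial (Fin d) (ZMod 2)) :
    sig0 d j c (sig0 d j c p) = p := by
  have hcomp : (sig0 d j c).comp (sig0 d j c)
      = AlgHom.id (ZMod 2) (MvPolynomial (Fin d) (ZMod 2)) := by
    apply MvPolynomial.algHom_ext
    intro i
    rcases eq_or_ne i j with rfl | hi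
    · rw [AlgHom.comp_apply, sig0_X_self, sig0_Vp d i c hcj, AlgHom.id_apply]
    · rw [AlgHom.comp_apply, sig0_X_ne d j c hi, sig0_X_ne d j c hi, AlgHom.id_apply]
  have := DFunLike.congr_fun hcomp p
  simpa using this

lemma sig0_mem (j : Fin d) (hj : j ≠ 0) (c : Fin d → ZMod 2)
    {p : MvPolynomial (Fin d) (ZMod 2)} (hp : p ∈ rgRel d) :
    sig0 d j c p ∈ rgRel d := by
  have hle : rgRel d ≤ (rgRel d).comap (sig0 d j c).toRingHom := by
    nth_rewrite 1 [rgRel]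
    rw [Ideal.span_le]
    rintro q hq
    rw [SetLike.mem_coe, Ideal.mem_comap]
    obtain rfl | ⟨i, hi, rfl⟩ := hq
    · have h0 : (0 : Fin d) ≠ j := fun h => hj h.symm
      simp only [AlgHom.toRingHom_eq_coe, RingHom.coe_coe, map_pow]
      rw [sig0_X_ne d j c h0]
      exact mem_rgRel_sq d
    · have h0 : (0 : Fin d) ≠ j := fun h => hj h.symm
      simp only [AlgHom.toRingHom_eq_coe, RingHom.coe_coe, map_sub, map_pow, map_mul]
      rw [sig0_X_ne d j c h0]
      rcases eq_or_ne i j with rfl | hij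
      · rw [sig0_X_self]
        exact V_rel d c
      · rw [sig0_X_ne d j c hij]
        exact mem_rgRel_rel d hi
  exact hle hp

/-- The induced involution of `RGH d`. -/
noncomputable def sigH (j : Fin d) (hj : j ≠ 0) (c : Fin d → ZMod 2) :
    RGH d →ₐ[ZMod 2] RGH d :=
  Ideal.Quotient.liftₐ (rgRel d)
    ((Ideal.Quotient.mkₐ (ZMod 2) (rgRel d)).comp (sig0 d j c))
    (fun a ha => by
      simp only [AlgHom.comp_apply, Ideal.Quotient.mkₐ_eq_mk]
      rw [Ideal.Quotient.eq_zero_iff_mem]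
      exact sig0_mem d j hj c ha)

lemma sigH_mk (j : Fin d) (hj : j ≠ 0) (c : Fin d → ZMod 2)
    (p : MvPolynomial (Fin d) (ZMod 2)) :
    sigH d j hj c (Ideal.Quotient.mk (rgRel d) p)
      = Ideal.Quotient.mk (rgRel d) (sig0 d j c p) := by
  rfl

/-! ### The rank-2 free module argument -/

/-- The polynomial `X² - t·X` over `RGH d`. -/
noncomputable def fpol : Polynomial (RGH d) :=
  Polynomial.X ^ 2 - Polynomial.C (gen d 0) * Polynomial.X

lemma fpol_CX_deg' (x : RGH d) :
    (Polynomial.C x * Polynomial.X).degree < ((2 : ℕ) : WithBot ℕ) := by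
  refine lt_of_le_of_lt (Polynomial.degree_mul_le _ _) ?_
  refine lt_of_le_of_lt (add_le_add Polynomial.degree_C_le Polynomial.degree_X_le) ?_
  norm_num

lemma fpol_CX_deg :
    (Polynomial.C (gen d 0) * Polynomial.X).degree < ((2 : ℕ) : WithBot ℕ) :=
  fpol_CX_deg' d _

lemma fpol_monic : (fpol d).Monic :=
  Polynomial.monic_X_pow_sub (fpol_CX_deg d)

lemma fpol_degree : (fpol d).degree = 2 := by
  have hlt : (Polynomial.C (gen d 0) * Polynomial.X).degree
      < (Polynomial.X ^ 2 : Polynomial (RGH d)).degree := by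
    rw [Polynomial.degree_X_pow]; exact fpol_CX_deg d
  rw [fpol, Polynomial.degree_sub_eq_left_of_degree_lt hlt, Polynomial.degree_X_pow]
  norm_cast

/-- Coefficients `ZMod 2 → AdjoinRoot (fpol d)`. -/
noncomputable def chi : ZMod 2 →+* AdjoinRoot (fpol d) :=
  (AdjoinRoot.of (fpol d)).comp ((Ideal.Quotient.mk (rgRel d)).comp MvPolynomial.C)

/-- Values of the variables in `AdjoinRoot (fpol d)`. -/
noncomputable def uu (j : Fin d) : Fin d → AdjoinRoot (fpol d) := fun i =>
  if i = j then AdjoinRoot.root (fpol d) else AdjoinRoot.of (fpol d) (gen d i)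

/-- The evaluation `MvPolynomial → AdjoinRoot (fpol d)` sending `X j` to the root. -/
noncomputable def Phi0 (j : Fin d) :
    MvPolynomial (Fin d) (ZMod 2) →+* AdjoinRoot (fpol d) :=
  eval₂Hom (chi d) (uu d j)

lemma Phi0_X_self (j : Fin d) : Phi0 d j (X j) = AdjoinRoot.root (fpol d) := by
  rw [Phi0, eval₂Hom_X']
  simp [uu]

lemma Phi0_X_ne (j : Fin d) {i : Fin d} (hi : i ≠ j) :
    Phi0 d j (X i) = AdjoinRoot.of (fpol d) (gen d i) := by
  rw [Phi0, eval₂Hom_X']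
  simp [uu, hi]

lemma root_sq : AdjoinRoot.root (fpol d) ^ 2
    = AdjoinRoot.of (fpol d) (gen d 0) * AdjoinRoot.root (fpol d) := by
  have h := AdjoinRoot.eval₂_root (fpol d)
  rw [fpol, Polynomial.eval₂_sub, Polynomial.eval₂_pow, Polynomial.eval₂_X,
    Polynomial.eval₂_mul, Polynomial.eval₂_C, Polynomial.eval₂_X, sub_eq_zero] at h
  exact h

lemma Phi0_ker (j : Fin d) (hj : j ≠ 0) : ∀ a ∈ rgRel d, Phi0 d j a = 0 := by
  have hle : rgRel d ≤ RingHom.ker (Phi0 d j) := by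
    nth_rewrite 1 [rgRel]
    rw [Ideal.span_le]
    rintro q hq
    rw [SetLike.mem_coe, RingHom.mem_ker]
    have h0 : (0 : Fin d) ≠ j := fun h => hj h.symm
    obtain rfl | ⟨i, hi, rfl⟩ := hq
    · rw [map_pow, Phi0_X_ne d j h0, ← map_pow, gen_zero_sq, map_zero]
    · rw [map_sub, map_pow, map_mul, Phi0_X_ne d j h0]
      rcases eq_or_ne i j with rfl | hij
      · rw [Phi0_X_self, root_sq, sub_self]
      · rw [Phi0_X_ne d j hij, ← map_pow, ← map_mul, gen_sq d hi, sub_self]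
  exact fun a ha => hle ha

/-- The induced map `RGH d → AdjoinRoot (fpol d)`. -/
noncomputable def Phi (j : Fin d) (hj : j ≠ 0) : RGH d →+* AdjoinRoot (fpol d) :=
  Ideal.Quotient.lift (rgRel d) (Phi0 d j) (Phi0_ker d j hj)

lemma Phi_mk (j : Fin d) (hj : j ≠ 0) (p : MvPolynomial (Fin d) (ZMod 2)) :
    Phi d j hj (Ideal.Quotient.mk (rgRel d) p) = Phi0 d j p :=
  Ideal.Quotient.lift_mk _ _ _

lemma fpol_eval {j : Fin d} (hj : j ≠ 0) :
    Polynomial.eval₂ (RingHom.id (RGH d)) (gen d j) (fpol d) = 0 := by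
  rw [fpol, Polynomial.eval₂_sub, Polynomial.eval₂_pow, Polynomial.eval₂_X,
    Polynomial.eval₂_mul, Polynomial.eval₂_C, Polynomial.eval₂_X, RingHom.id_apply,
    gen_sq d hj, sub_self]

/-- The retraction `AdjoinRoot (fpol d) → RGH d` sending the root to `gen d j`. -/
noncomputable def Psi (j : Fin d) (hj : j ≠ 0) : AdjoinRoot (fpol d) →+* RGH d :=
  AdjoinRoot.lift (RingHom.id (RGH d)) (gen d j) (fpol_eval d hj)

lemma Psi_Phi (j : Fin d) (hj : j ≠ 0) (h : RGH d) :
    Psi d j hj (Phi d j hj h) = h := by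
  obtain ⟨p, rfl⟩ := Ideal.Quotient.mk_surjective h
  have hcomp : (Psi d j hj).comp ((Phi d j hj).comp (Ideal.Quotient.mk (rgRel d)))
      = Ideal.Quotient.mk (rgRel d) := by
    apply MvPolynomial.ringHom_ext
    · intro r
      have hz := RingHom.ext_zmod
        (((Psi d j hj).comp ((Phi d j hj).comp (Ideal.Quotient.mk (rgRel d)))).comp
          (MvPolynomial.C : ZMod 2 →+* MvPolynomial (Fin d) (ZMod 2)))
        ((Ideal.Quotient.mk (rgRel d)).comp
          (MvPolynomial.C : ZMod 2 →+* MvPolynomial (Fin d) (ZMod 2)))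
      exact DFunLike.congr_fun hz r
    · intro i
      simp only [RingHom.comp_apply]
      rw [Phi_mk]
      rcases eq_or_ne i j with rfl | hi
      · rw [Phi0_X_self, Psi, AdjoinRoot.lift_root]
        rfl
      · rw [Phi0_X_ne d j hi, Psi, AdjoinRoot.lift_of]
        rfl
  exact DFunLike.congr_fun hcomp p

set_option maxHeartbeats 1600000 in
/-- Core case of the theorem: `v = gen d j` with `j ≠ 0`. -/
lemma core (j : Fin d) (hj : j ≠ 0) (h : RGH d) (hmul : h * gen d j = 0) :
    h ∈ Ideal.span {gen d 0 + gen d j} := by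
  classical
  obtain ⟨q, hq⟩ := AdjoinRoot.mk_surjective (g := fpol d) (Phi d j hj h)
  set r := q %ₘ fpol d with hrdef
  have hmkr : AdjoinRoot.mk (fpol d) r = Phi d j hj h := by
    rw [← hq]
    conv_rhs => rw [← Polynomial.modByMonic_add_div q (fpol d)]
    rw [map_add, map_mul, AdjoinRoot.mk_self, zero_mul, add_zero]
  have hdegr : r.degree ≤ 1 := by
    have hlt := Polynomial.degree_modByMonic_lt q (fpol_monic d)
    rw [fpol_degree] at hlt
    rcases eq_or_ne r 0 with hr0 | hr0
    · rw [hr0, Polynomial.degree_zero]; exact bot_le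
    · have hn : r.natDegree < 2 := by
        rw [Polynomial.natDegree_lt_iff_degree_lt hr0]
        exact_mod_cast hlt
      have h1 : r.natDegree ≤ 1 := by omega
      refine Polynomial.degree_le_natDegree.trans ?_
      exact_mod_cast h1
  set a := r.coeff 0 with ha
  set b := r.coeff 1 with hb
  have hrdecomp : r = Polynomial.C b * Polynomial.X + Polynomial.C a :=
    Polynomial.eq_X_add_C_of_degree_le_one hdegr
  have hrootzero : Phi d j hj h * AdjoinRoot.root (fpol d) = 0 := by
    have h1 : Phi d j hj (h * gen d j) = 0 := by rw [hmul, map_zero]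
    rw [map_mul] at h1
    have h2 : Phi d j hj (gen d j) = AdjoinRoot.root (fpol d) := by
      rw [gen, Phi_mk, Phi0_X_self]
    rwa [h2] at h1
  have hdvd : fpol d ∣ r * Polynomial.X := by
    rw [← AdjoinRoot.mk_eq_zero, map_mul, hmkr, AdjoinRoot.mk_X]
    exact hrootzero
  have hdvd2 : fpol d ∣ Polynomial.C (a + b * gen d 0) * Polynomial.X := by
    have heq : Polynomial.C (a + b * gen d 0) * Polynomial.X
        = r * Polynomial.X - Polynomial.C b * fpol d := by
      rw [hrdecomp, fpol, map_add, map_mul]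
      ring
    rw [heq]
    exact dvd_sub hdvd (dvd_mul_left (fpol d) (Polynomial.C b))
  have hab : a + b * gen d 0 = 0 := by
    obtain ⟨k, hk⟩ := hdvd2
    rcases eq_or_ne k 0 with rfl | hk0
    · rw [mul_zero] at hk
      have := congrArg (fun p => Polynomial.coeff p 1) hk
      simpa using this
    · exfalso
      have h3 := fpol_CX_deg' d (a + b * gen d 0)
      rw [hk, mul_comm (fpol d) k, (fpol_monic d).degree_mul, fpol_degree,
        Polynomial.degree_eq_natDegree hk0] at h3
      have h4 : k.natDegree + 2 < 2 := by exact_mod_cast h3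
      omega
  have hPhi : Phi d j hj h = AdjoinRoot.mk (fpol d)
      (Polynomial.C b * (Polynomial.X - Polynomial.C (gen d 0))) := by
    rw [← hmkr, hrdecomp]
    congr 1
    have haneg : a = -(b * gen d 0) := eq_neg_of_add_eq_zero_left hab
    rw [haneg, map_neg, map_mul]
    try ring
  have hfin : h = b * (gen d j - gen d 0) := by
    have h4 := (Psi_Phi d j hj h).symm
    rw [hPhi, Psi, AdjoinRoot.lift_mk] at h4
    rw [h4]
    simp [Polynomial.eval₂_mul, Polynomial.eval₂_sub, Polynomial.eval₂_C,
      Polynomial.eval₂_X]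
  rw [Ideal.mem_span_singleton]
  refine ⟨b, ?_⟩
  rw [hfin, sub_eq_add_neg, neg_eq_self d (gen d 0), add_comm (gen d j)]
  ring

end Stmt13Aux

set_option maxHeartbeats 1600000 in
open Stmt13Aux in
/-- For every `v` in the `F₂`-span of `{t, α₂, …, α_d}` with `v ≠ 0`
and `v ≠ t`, the annihilator `(0) : v` equals the ideal generated by `t + v`. -/
theorem stmt13 (d : ℕ) [NeZero d] (hd : 2 ≤ d)
    (v : RGH d) (hv : v ∈ H1 d) (hv0 : v ≠ 0) (hvt : v ≠ gen d 0) :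
    colonIdeal (⊥ : Ideal (RGH d)) v = Ideal.span {gen d 0 + v} := by
  classical
  obtain ⟨c, hc⟩ := (Submodule.mem_span_range_iff_exists_fun (ZMod 2)).mp hv
  have hzmod : ∀ x : ZMod 2, x = 0 ∨ x = 1 := by decide
  have hex : ∃ j : Fin d, j ≠ 0 ∧ c j = 1 := by
    by_contra hno
    push_neg at hno
    have hcz : ∀ i : Fin d, i ≠ 0 → c i = 0 := by
      intro i hi
      rcases hzmod (c i) with h | h
      · exact h
      · exact absurd h (hno i hi)
    have hsum : v = c 0 • gen d 0 := by
      rw [← hc, Finset.sum_eq_single 0]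
      · intro i _ hi; rw [hcz i hi, zero_smul]
      · intro habs; exact absurd (Finset.mem_univ 0) habs
    rcases hzmod (c 0) with h | h
    · rw [h, zero_smul] at hsum; exact hv0 hsum
    · rw [h, one_smul] at hsum; exact hvt hsum
  obtain ⟨j, hj, hcj⟩ := hex
  have hvmk : v = Ideal.Quotient.mk (rgRel d) (Vp d c) := by
    rw [← hc, Vp, map_sum]
    refine Finset.sum_congr rfl fun i _ => ?_
    rw [← MvPolynomial.smul_eq_C_mul, ← Ideal.Quotient.mkₐ_eq_mk (ZMod 2), map_smul,
      Ideal.Quotient.mkₐ_eq_mk]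
    rfl
  set σ := sigH d j hj c with hσ
  have hσv : σ v = gen d j := by
    rw [hvmk, hσ, sigH_mk, sig0_Vp d j c hcj]
    rfl
  have hσt : σ (gen d 0) = gen d 0 := by
    rw [gen, hσ, sigH_mk, sig0_X_ne d j c (fun h => hj h.symm)]
  have hσj : σ (gen d j) = v := by
    rw [gen, hσ, sigH_mk, sig0_X_self, ← hvmk]
  have hσσ : ∀ x : RGH d, σ (σ x) = x := by
    intro x
    obtain ⟨p, rfl⟩ := Ideal.Quotient.mk_surjective x
    rw [hσ, sigH_mk, sigH_mk, sig0_sig0 d j c hcj]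
  have hmem : ∀ h : RGH d, h ∈ colonIdeal (⊥ : Ideal (RGH d)) v ↔ h * v = 0 := by
    intro h
    simp only [colonIdeal, Submodule.mem_comap, LinearMap.toSpanSingleton_apply,
      smul_eq_mul, Ideal.mem_bot]
  ext h
  rw [hmem h]
  constructor
  · intro hh
    have h1 : σ h * gen d j = 0 := by
      rw [← hσv, ← map_mul, hh, map_zero]
    have h2 := core d j hj (σ h) h1
    have h3 : σ (σ h) ∈ Ideal.map σ.toRingHom (Ideal.span {gen d 0 + gen d j}) :=
      Ideal.mem_map_of_mem _ h2
    rw [hσσ h, Ideal.map_span, Set.image_singleton] at h3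
    have h4 : σ.toRingHom (gen d 0 + gen d j) = gen d 0 + v := by
      show σ (gen d 0 + gen d j) = gen d 0 + v
      rw [map_add, hσt, hσj]
    rwa [h4] at h3
  · intro hh
    obtain ⟨k, hk⟩ := Ideal.mem_span_singleton.mp hh
    have hvsq : v * v = gen d 0 * v := by
      have h0 : Ideal.Quotient.mk (rgRel d) ((Vp d c) ^ 2 - X 0 * Vp d c) = 0 :=
        Ideal.Quotient.eq_zero_iff_mem.mpr (V_rel d c)
      rw [map_sub, map_pow, map_mul, sub_eq_zero, ← hvmk, pow_two] at h0
      exact h0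
    rw [hk]
    calc (gen d 0 + v) * k * v = k * (gen d 0 * v + v * v) := by ring
    _ = k * (gen d 0 * v + gen d 0 * v) := by rw [hvsq]
    _ = k * 0 := by rw [Stmt13Aux.add_self_eq_zero d]
    _ = 0 := mul_zero k
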